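/- Let (A, μ, α) be a Hom-supercommutative algebra and D an even derivation with Dα = αD. For any ξ ∈ F, the product x *_ξ y = x·D(y) + ξ·x·y makes (A, *_ξ, α) a Hom-Novikov superalgebra. -/
import Mathlib


/-- The deformed product `x *_ξ y = x · D(y) + ξ x · y`. -/
def xiprod {𝕜 A : Type*} [Field 𝕜] [AddCommGroup A] [Module 𝕜 A]
    (mul : A →ₗ[𝕜] A →ₗ[𝕜] A) (D : A →ₗ[𝕜] A) (ξ : 𝕜) (x y : A) : A :=
  mul x (D y) + ξ • mul x y

theorem stmt15
    (𝕜 A : Type*) [Field 𝕜] [AddCommGroup A] [Module 𝕜 A]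
    (G : ZMod 2 → Submodule 𝕜 A) (hG : DirectSum.IsInternal G)
    (mul : A →ₗ[𝕜] A →ₗ[𝕜] A) (α : A →ₗ[𝕜] A)
    (hmul_even : ∀ i j : ZMod 2, ∀ x ∈ G i, ∀ y ∈ G j, mul x y ∈ G (i + j))
    (hα_even : ∀ i : ZMod 2, ∀ x ∈ G i, α x ∈ G i)
    (hα_mul : ∀ x y : A, α (mul x y) = mul (α x) (α y))
    (hassoc : ∀ x y z : A, mul (mul x y) (α z) = mul (α x) (mul y z))
    (hcomm : ∀ i j : ZMod 2, ∀ x ∈ G i, ∀ y ∈ G j,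
      mul x y = ((-1 : 𝕜) ^ (i.val * j.val)) • mul y x)
    (D : A →ₗ[𝕜] A)
    (hD_even : ∀ i : ZMod 2, ∀ x ∈ G i, D x ∈ G i)
    (hD : ∀ x y : A, D (mul x y) = mul (D x) y + mul x (D y))
    (hDα : ∀ x : A, D (α x) = α (D x))
    (ξ : 𝕜) :
    (∀ i j : ZMod 2, ∀ x ∈ G i, ∀ y ∈ G j, xiprod mul D ξ x y ∈ G (i + j)) ∧
    (∀ x y : A, α (xiprod mul D ξ x y) = xiprod mul D ξ (α x) (α y)) ∧
    (∀ i j k : ZMod 2, ∀ x ∈ G i, ∀ y ∈ G j, ∀ z ∈ G k,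
      xiprod mul D ξ (xiprod mul D ξ x y) (α z)
          - xiprod mul D ξ (α x) (xiprod mul D ξ y z)
        = ((-1 : 𝕜) ^ (i.val * j.val)) •
            (xiprod mul D ξ (xiprod mul D ξ y x) (α z)
              - xiprod mul D ξ (α y) (xiprod mul D ξ x z))) ∧
    (∀ i j k : ZMod 2, ∀ x ∈ G i, ∀ y ∈ G j, ∀ z ∈ G k,
      xiprod mul D ξ (xiprod mul D ξ x y) (α z)
        = ((-1 : 𝕜) ^ (j.val * k.val)) • xiprod mul D ξ (xiprod mul D ξ x z) (α y)) := by
  -- auxiliary swap lemma : α x · (y · w) = (-1)^{ij} • α y · (x · w)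
  have swap : ∀ i j : ZMod 2, ∀ x ∈ G i, ∀ y ∈ G j, ∀ w : A,
      mul (α x) (mul y w) = ((-1 : 𝕜) ^ (i.val * j.val)) • mul (α y) (mul x w) := by
    intro i j x hx y hy w
    rw [← hassoc, ← hassoc, hcomm i j x hx y hy, LinearMap.map_smul₂]
  refine ⟨?_, ?_, ?_, ?_⟩
  · intro i j x hx y hy
    exact Submodule.add_mem _ (hmul_even i j x hx _ (hD_even j y hy))
      (Submodule.smul_mem _ _ (hmul_even i j x hx y hy))
  · intro x y
    simp [xiprod, hα_mul, hDα, map_add, map_smul]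
  · intro i j k x hx y hy z hz
    simp only [xiprod, map_add, map_smul, LinearMap.add_apply, LinearMap.smul_apply,
      hDα, hassoc, hD, smul_add]
    rw [swap i j x hx y hy (D (D z)), swap i j x hx y hy (D z),
      swap i j x hx y hy z, swap i j x hx (D y) (hD_even j y hy) (D z)]
    module
  · intro i j k x hx y hy z hz
    simp only [xiprod, map_add, map_smul, LinearMap.add_apply, LinearMap.smul_apply,
      hDα, hassoc, hD, smul_add]
    rw [hcomm j k (D y) (hD_even j y hy) (D z) (hD_even k z hz),
      hcomm j k y hy (D z) (hD_even k z hz),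
      hcomm j k (D y) (hD_even j y hy) z hz,
      hcomm j k y hy z hz]
    simp only [map_smul]
    module
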